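/- arXiv:2505.00917 — 5 statements merged into one kernel-verified Lean document; each statement's English description precedes it below -/
import Mathlib

section
/- Let (X_1,Y_1),…,(X_{n+1},Y_{n+1}) be i.i.d. random pairs with values in ℝ^p × ℝ^d, let R ⊆ ℝ^d be a measurable set, let V : ℝ^p × ℝ^d → ℝ be a measurable function that is regionally monotone with respect to R, fix a point r ∈ R, and let U be uniformly distributed on (0,1) and independent of the data. Set V_i = V(X_i, Y_i) for i = 1,…,n and V̂ = V(X_{n+1}, r), and define p = (#{i ≤ n : V_i < V̂} + U·(1 + #{i ≤ n : V_i = V̂}))/(n+1). Then for every α ∈ (0,1), P(p ≤ α and Y_{n+1} ∉ R) ≤ α. -/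
open MeasureTheory ProbabilityTheory

/-- A nonconformity score `V : ℝ^p × ℝ^d → ℝ` is *regionally monotone* with respect to a
target region `R ⊆ ℝ^d` if `V(x, y') ≤ V(x, y)` whenever `y' ∉ R` and `y ∈ R`. -/
def RegionallyMonotone {p d : ℕ} (R : Set (Fin d → ℝ))
    (V : (Fin p → ℝ) → (Fin d → ℝ) → ℝ) : Prop :=
  ∀ (x : Fin p → ℝ) (y' y : Fin d → ℝ), y' ∉ R → y ∈ R → V x y' ≤ V x y

section Aux
open Finset Set

lemma perm_filter_card {m : ℕ} (σ : Equiv.Perm (Fin m)) (q : Fin m → Prop) [DecidablePred q] :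
    (Finset.univ.filter fun i => q (σ i)).card = (Finset.univ.filter q).card := by
  simp_rw [Finset.card_filter]
  exact Equiv.sum_comp σ (fun i => if q i then 1 else 0)

lemma castSucc_filter_card_of_not {m : ℕ} (P : Fin (m+1) → Prop) [DecidablePred P]
    (h : ¬ P (Fin.last m)) :
    (Finset.univ.filter P).card = (Finset.univ.filter fun i : Fin m => P i.castSucc).card := by
  simp_rw [Finset.card_filter]
  rw [Fin.sum_univ_castSucc]
  simp [h]

lemma castSucc_filter_card_of_pos {m : ℕ} (P : Fin (m+1) → Prop) [DecidablePred P]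
    (h : P (Fin.last m)) :
    (Finset.univ.filter P).card = (Finset.univ.filter fun i : Fin m => P i.castSucc).card + 1 := by
  simp_rw [Finset.card_filter]
  rw [Fin.sum_univ_castSucc]
  simp [h]

lemma count_lt_add_eq_le {m : ℕ} (x : Fin m → ℝ) {a b : ℝ} (h : a < b) :
    (Finset.univ.filter fun i => x i < a).card + (Finset.univ.filter fun i => x i = a).card
      ≤ (Finset.univ.filter fun i => x i < b).card := by
  classical
  rw [← Finset.card_union_of_disjoint]
  · apply Finset.card_le_card
    intro i hi
    simp only [Finset.mem_union, Finset.mem_filter, Finset.mem_univ, true_and] at hi ⊢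
    rcases hi with h1 | h1
    · exact h1.trans h
    · exact h1 ▸ h
  · rw [Finset.disjoint_left]
    intro i h1 h2
    simp only [Finset.mem_filter, Finset.mem_univ, true_and] at h1 h2
    exact absurd (h2 ▸ h1) (lt_irrefl a)

lemma key_interval_sum (C G : ℝ → ℝ) :
    ∀ S : Finset ℝ, (∀ v ∈ S, 0 ≤ C v) → (∀ v ∈ S, 0 ≤ G v) →
    (∀ v ∈ S, ∀ v' ∈ S, v < v' → C v + G v ≤ C v') →
    ∀ t : ℝ, ∑ v ∈ S, max 0 (min (t - C v) (G v)) ≤ max t 0 := by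
  classical
  intro S
  induction S using Finset.induction_on_max with
  | empty => intro _ _ _ t; simp [le_max_right]
  | insert a s hmax ih =>
    intro hC hG hord t
    have has : a ∉ s := fun h => absurd (hmax a h) (lt_irrefl a)
    rw [Finset.sum_insert has]
    have hCa : 0 ≤ C a := hC a (Finset.mem_insert_self a s)
    have hGa : 0 ≤ G a := hG a (Finset.mem_insert_self a s)
    have hsum : ∑ v ∈ s, max 0 (min (t - C v) (G v))
        = ∑ v ∈ s, max 0 (min (min t (C a) - C v) (G v)) := by
      refine Finset.sum_congr rfl (fun v hv => ?_)
      rcases le_or_gt t (C a) with h | h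
      · rw [min_eq_left h]
      · have hv' : C v + G v ≤ C a :=
          hord v (Finset.mem_insert_of_mem hv) a (Finset.mem_insert_self a s) (hmax v hv)
        rw [min_eq_right h.le, min_eq_right (by linarith), min_eq_right (by linarith)]
    have hrest : ∑ v ∈ s, max 0 (min (min t (C a) - C v) (G v)) ≤ max (min t (C a)) 0 :=
      ih (fun v hv => hC v (Finset.mem_insert_of_mem hv))
        (fun v hv => hG v (Finset.mem_insert_of_mem hv))
        (fun v hv v' hv' => hord v (Finset.mem_insert_of_mem hv) v' (Finset.mem_insert_of_mem hv'))
        _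
    have hterm : max 0 (min (t - C a) (G a)) ≤ max 0 (t - C a) :=
      max_le_max le_rfl (min_le_left _ _)
    rw [hsum]
    rcases le_or_gt t (C a) with h | h
    · have h1 : max 0 (t - C a) = 0 := max_eq_left (by linarith)
      have h2 : max (min t (C a)) 0 = max t 0 := by rw [min_eq_left h]
      calc max 0 (min (t - C a) (G a)) + ∑ v ∈ s, max 0 (min (min t (C a) - C v) (G v))
          ≤ 0 + max t 0 := add_le_add (hterm.trans h1.le) (hrest.trans h2.le)
        _ = max t 0 := by ring
    · have h1 : max 0 (t - C a) = t - C a := max_eq_right (by linarith)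
      have h2 : max (min t (C a)) 0 = C a := by rw [min_eq_right h.le, max_eq_left hCa]
      calc max 0 (min (t - C a) (G a)) + ∑ v ∈ s, max 0 (min (min t (C a) - C v) (G v))
          ≤ (t - C a) + C a := add_le_add (hterm.trans h1.le) (hrest.trans h2.le)
        _ = t := by ring
        _ ≤ max t 0 := le_max_left t 0

lemma ofReal_max_zero (x : ℝ) : ENNReal.ofReal (max 0 x) = ENNReal.ofReal x := by
  rcases le_total 0 x with h | h
  · rw [max_eq_right h]
  · rw [max_eq_left h, ENNReal.ofReal_of_nonpos h, ENNReal.ofReal_zero]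

lemma vol_Iic_inter_Ioo (b : ℝ) :
    volume (Set.Iic b ∩ Set.Ioo (0:ℝ) 1) = ENNReal.ofReal (min b 1) := by
  rcases le_or_gt b 0 with hb | hb
  · have h1 : Set.Iic b ∩ Set.Ioo (0:ℝ) 1 = ∅ := by
      ext x
      simp only [Set.mem_inter_iff, Set.mem_Iic, Set.mem_Ioo, Set.mem_empty_iff_false, iff_false]
      rintro ⟨h1, h2, _⟩; linarith
    rw [h1, measure_empty, min_eq_left (hb.trans zero_le_one),
      Eq.comm, ENNReal.ofReal_eq_zero]
    exact hb
  · rcases lt_or_ge b 1 with hb1 | hb1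
    · have h1 : Set.Iic b ∩ Set.Ioo (0:ℝ) 1 = Set.Ioc 0 b := by
        ext x
        simp only [Set.mem_inter_iff, Set.mem_Iic, Set.mem_Ioo, Set.mem_Ioc]
        constructor
        · rintro ⟨h1, h2, _⟩; exact ⟨h2, h1⟩
        · rintro ⟨h1, h2⟩; exact ⟨h2, h1, by linarith⟩
      rw [h1, Real.volume_Ioc, min_eq_left hb1.le, sub_zero]
    · have h1 : Set.Iic b ∩ Set.Ioo (0:ℝ) 1 = Set.Ioo 0 1 := by
        apply Set.inter_eq_right.mpr
        rintro x ⟨h1, h2⟩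
        exact le_trans h2.le hb1
      rw [h1, Real.volume_Ioo, min_eq_right hb1, sub_zero]

lemma slice_sum {m : ℕ} (w : Fin m → ℝ) {t : ℝ} (ht : 0 ≤ t) :
    ∑ j : Fin m, (volume.restrict (Set.Ioo (0:ℝ) 1))
      {u : ℝ | ((Finset.univ.filter fun i => w i < w j).card : ℝ)
        + u * ((Finset.univ.filter fun i => w i = w j).card : ℝ) ≤ t}
      ≤ ENNReal.ofReal t := by
  classical
  set c : ℝ → ℝ := fun v => ((Finset.univ.filter fun i => w i < v).card : ℝ) with hc
  set g : ℝ → ℝ := fun v => ((Finset.univ.filter fun i => w i = v).card : ℝ) with hgdef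
  have hgpos : ∀ j : Fin m, 0 < g (w j) := by
    intro j
    have hj : j ∈ Finset.univ.filter fun i => w i = w j :=
      Finset.mem_filter.mpr ⟨Finset.mem_univ j, rfl⟩
    have := Finset.card_pos.mpr ⟨j, hj⟩
    simp only [hgdef]
    exact_mod_cast this
  have hterm : ∀ j : Fin m, (volume.restrict (Set.Ioo (0:ℝ) 1))
      {u : ℝ | c (w j) + u * g (w j) ≤ t}
      = ENNReal.ofReal (max 0 (min ((t - c (w j)) / g (w j)) 1)) := by
    intro j
    have hset : {u : ℝ | c (w j) + u * g (w j) ≤ t} = Set.Iic ((t - c (w j)) / g (w j)) := by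
      ext u
      rw [Set.mem_setOf_eq, Set.mem_Iic, le_div_iff₀ (hgpos j)]
      constructor <;> intro h <;> linarith
    rw [hset, Measure.restrict_apply measurableSet_Iic, vol_Iic_inter_Ioo, ofReal_max_zero]
  calc ∑ j : Fin m, (volume.restrict (Set.Ioo (0:ℝ) 1))
        {u : ℝ | c (w j) + u * g (w j) ≤ t}
      = ∑ j : Fin m, ENNReal.ofReal (max 0 (min ((t - c (w j)) / g (w j)) 1)) :=
        Finset.sum_congr rfl (fun j _ => hterm j)
    _ = ENNReal.ofReal (∑ j : Fin m, max 0 (min ((t - c (w j)) / g (w j)) 1)) :=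
        (ENNReal.ofReal_sum_of_nonneg (fun j _ => le_max_left _ _)).symm
    _ ≤ ENNReal.ofReal t := by
        apply ENNReal.ofReal_le_ofReal
        have hfib : ∑ j : Fin m, max 0 (min ((t - c (w j)) / g (w j)) 1)
            = ∑ v ∈ Finset.univ.image w, max 0 (min (t - c v) (g v)) := by
          rw [← Finset.sum_fiberwise_of_maps_to
            (fun j _ => Finset.mem_image_of_mem w (Finset.mem_univ j))
            (fun j => max 0 (min ((t - c (w j)) / g (w j)) 1))]
          refine Finset.sum_congr rfl (fun v hv => ?_)
          have hgv : 0 < g v := by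
            obtain ⟨j, _, rfl⟩ := Finset.mem_image.mp hv
            exact hgpos j
          have hconst : ∀ j ∈ Finset.univ.filter fun j => w j = v,
              max 0 (min ((t - c (w j)) / g (w j)) 1)
                = max 0 (min ((t - c v) / g v) 1) := by
            intro j hj
            rw [(Finset.mem_filter.mp hj).2]
          rw [Finset.sum_congr rfl hconst, Finset.sum_const, nsmul_eq_mul]
          have hcard : ((Finset.univ.filter fun j => w j = v).card : ℝ) = g v := rfl
          rw [hcard, mul_max_of_nonneg _ _ hgv.le, mul_zero,
            mul_min_of_nonneg _ _ hgv.le, mul_one, mul_div_cancel₀ _ hgv.ne']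
        rw [hfib]
        have hks := key_interval_sum c g (Finset.univ.image w)
          (fun v _ => by positivity)
          (fun v _ => by positivity)
          (fun v hv v' hv' hlt => by
            have := count_lt_add_eq_le w hlt
            simp only [hc, hgdef]
            exact_mod_cast this) t
        calc ∑ v ∈ Finset.univ.image w, max 0 (min (t - c v) (g v)) ≤ max t 0 := hks
          _ = t := max_eq_left ht

variable {Ω : Type*} [MeasurableSpace Ω]

lemma map_fun_eq_pi {μ : Measure Ω} [IsProbabilityMeasure μ] {m : ℕ}
    (W : Fin (m+1) → Ω → ℝ) (hmeas : ∀ i, Measurable (W i))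
    (hindep : iIndepFun W μ)
    (hident : ∀ i, μ.map (W i) = μ.map (W 0)) :
    μ.map (fun ω i => W i ω) = Measure.pi (fun _ => μ.map (W 0)) := by
  have hPm : ∀ i : Fin (m+1), IsProbabilityMeasure (μ.map (W i)) :=
    fun i => Measure.isProbabilityMeasure_map (hmeas i).aemeasurable
  haveI := hPm 0
  symm
  apply Measure.pi_eq
  intro s hs
  rw [Measure.map_apply (measurable_pi_lambda _ hmeas) (MeasurableSet.univ_pi hs)]
  have hpre : (fun ω i => W i ω) ⁻¹' (Set.pi Set.univ s) = ⋂ i ∈ Finset.univ, W i ⁻¹' s i := by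
    ext ω
    simp [Set.mem_pi]
  rw [hpre, hindep.measure_inter_preimage_eq_mul Finset.univ (fun i _ => hs i)]
  refine Finset.prod_congr rfl (fun i _ => ?_)
  rw [← Measure.map_apply (hmeas i) (hs i), hident i]

lemma pi_map_comp_perm {m : ℕ} (ν : Measure ℝ) [IsProbabilityMeasure ν]
    (σ : Equiv.Perm (Fin m)) :
    (Measure.pi fun _ : Fin m => ν).map (fun w => w ∘ σ) = Measure.pi (fun _ => ν) := by
  symm
  apply Measure.pi_eq
  intro s hs
  have hmeas : Measurable (fun w : Fin m → ℝ => w ∘ σ) :=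
    measurable_pi_lambda _ (fun i => measurable_pi_apply (σ i))
  rw [Measure.map_apply hmeas (MeasurableSet.univ_pi hs)]
  have hpre : (fun w : Fin m → ℝ => w ∘ σ) ⁻¹' (Set.pi Set.univ s)
      = Set.pi Set.univ (fun i => s (σ.symm i)) := by
    ext w
    simp only [Set.mem_preimage, Set.mem_pi, Set.mem_univ, true_implies, Function.comp]
    constructor
    · intro h i
      have := h (σ.symm i)
      rwa [Equiv.apply_symm_apply] at this
    · intro h i
      have := h (σ i)
      rwa [Equiv.symm_apply_apply] at this
  rw [hpre, Measure.pi_pi]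
  exact Equiv.prod_comp σ.symm (fun i => ν (s i))

end Aux

/-- **Conservativeness of the practical conformal p-value** (Proposition 3.1).
If `(X_i, Y_i), i = 1, …, n+1` are i.i.d., `V` is a measurable nonconformity score that is
regionally monotone with respect to a measurable region `R`, `r ∈ R`, and `U` is uniform on
`(0,1)` independent of the data, then the practical conformal p-value
`p = (#{i ≤ n : V_i < V̂} + U (1 + #{i ≤ n : V_i = V̂}))/(n+1)` with `V_i = V(X_i, Y_i)` and
`V̂ = V(X_{n+1}, r)` satisfies `P(p ≤ α and Y_{n+1} ∉ R) ≤ α` for all `α ∈ (0,1)`. -/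
theorem practical_conformal_pvalue_conservative
    {Ω : Type*} [MeasurableSpace Ω] (μ : Measure Ω) [IsProbabilityMeasure μ]
    (p d n : ℕ)
    (Z : Fin (n + 1) → Ω → (Fin p → ℝ) × (Fin d → ℝ))
    (hZmeas : ∀ i, Measurable (Z i))
    (hZindep : iIndepFun Z μ)
    (hZident : ∀ i, Measure.map (Z i) μ = Measure.map (Z 0) μ)
    (R : Set (Fin d → ℝ)) (hR : MeasurableSet R)
    (V : (Fin p → ℝ) → (Fin d → ℝ) → ℝ)
    (hVmeas : Measurable (fun q : (Fin p → ℝ) × (Fin d → ℝ) => V q.1 q.2))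
    (hVmono : RegionallyMonotone R V)
    (r : Fin d → ℝ) (hr : r ∈ R)
    (U : Ω → ℝ) (hUmeas : Measurable U)
    (hUunif : Measure.map U μ = volume.restrict (Set.Ioo (0 : ℝ) 1))
    (hUindep : IndepFun U (fun ω i => Z i ω) μ)
    (pval : Ω → ℝ)
    (hpval : ∀ ω, pval ω =
      (((Finset.univ.filter (fun i : Fin n =>
            V (Z i.castSucc ω).1 (Z i.castSucc ω).2 < V (Z (Fin.last n) ω).1 r)).card : ℝ)
        + U ω * (1 + ((Finset.univ.filter (fun i : Fin n =>
            V (Z i.castSucc ω).1 (Z i.castSucc ω).2 = V (Z (Fin.last n) ω).1 r)).card : ℝ)))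
        / (n + 1))
    (α : ℝ) (hα : α ∈ Set.Ioo (0 : ℝ) 1) :
    μ {ω | pval ω ≤ α ∧ (Z (Fin.last n) ω).2 ∉ R} ≤ ENNReal.ofReal α := by
  classical
  obtain ⟨hα0, hα1⟩ := hα
  set t : ℝ := α * (n + 1) with ht_def
  have hn1 : (0:ℝ) < (n:ℝ) + 1 := by positivity
  have ht0 : 0 ≤ t := by positivity
  set Wf : Fin (n+1) → Ω → ℝ := fun i ω => V (Z i ω).1 (Z i ω).2 with hWf
  have hWmeas : ∀ i, Measurable (Wf i) := fun i => hVmeas.comp (hZmeas i)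
  have hWvecmeas : Measurable (fun ω (i : Fin (n+1)) => Wf i ω) :=
    measurable_pi_lambda _ hWmeas
  set ν : Measure ℝ := μ.map (Wf 0) with hν
  haveI : IsProbabilityMeasure ν := Measure.isProbabilityMeasure_map (hWmeas 0).aemeasurable
  haveI : IsProbabilityMeasure (μ.map U) := Measure.isProbabilityMeasure_map hUmeas.aemeasurable
  have hWident : ∀ i, μ.map (Wf i) = μ.map (Wf 0) := by
    intro i
    have h1 : μ.map (Wf i)
        = (μ.map (Z i)).map (fun q : (Fin p → ℝ) × (Fin d → ℝ) => V q.1 q.2) :=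
      (Measure.map_map hVmeas (hZmeas i)).symm
    have h2 : μ.map (Wf 0)
        = (μ.map (Z 0)).map (fun q : (Fin p → ℝ) × (Fin d → ℝ) => V q.1 q.2) :=
      (Measure.map_map hVmeas (hZmeas 0)).symm
    rw [h1, h2, hZident i]
  have hWindep : iIndepFun Wf μ :=
    hZindep.comp (fun _ q => V q.1 q.2) (fun _ => hVmeas)
  have hpi : μ.map (fun ω i => Wf i ω) = Measure.pi (fun _ : Fin (n+1) => ν) :=
    map_fun_eq_pi Wf hWmeas hWindep hWident
  have hUW : IndepFun U (fun ω (i : Fin (n+1)) => Wf i ω) μ := by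
    have hφ : Measurable (fun z : Fin (n+1) → (Fin p → ℝ) × (Fin d → ℝ) =>
        fun i => V (z i).1 (z i).2) :=
      measurable_pi_lambda _ (fun i => hVmeas.comp (measurable_pi_apply i))
    exact hUindep.comp measurable_id hφ
  set J : Ω → ℝ × (Fin (n+1) → ℝ) := fun ω => (U ω, fun i => Wf i ω) with hJ
  have hJmeas : Measurable J := hUmeas.prodMk hWvecmeas
  set κ : Measure (ℝ × (Fin (n+1) → ℝ)) :=
    (μ.map U).prod (Measure.pi fun _ : Fin (n+1) => ν) with hκ
  have hκJ : μ.map J = κ := by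
    rw [hκ, ← hpi]
    exact (indepFun_iff_map_prod_eq_prod_map_map hUmeas.aemeasurable
      hWvecmeas.aemeasurable).mp hUW
  set S : Fin (n+1) → Set (ℝ × (Fin (n+1) → ℝ)) := fun j =>
    {q | ((Finset.univ.filter fun i => q.2 i < q.2 j).card : ℝ)
        + q.1 * ((Finset.univ.filter fun i => q.2 i = q.2 j).card : ℝ) ≤ t} with hS
  have hcntlt_meas : ∀ j, Measurable (fun q : ℝ × (Fin (n+1) → ℝ) =>
      ((Finset.univ.filter fun i => q.2 i < q.2 j).card : ℝ)) := by
    intro j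
    simp_rw [Finset.card_filter]
    push_cast
    refine Finset.measurable_sum _ (fun i _ => ?_)
    exact Measurable.ite (measurableSet_lt measurable_snd.eval measurable_snd.eval) measurable_const measurable_const
  have hcnteq_meas : ∀ j, Measurable (fun q : ℝ × (Fin (n+1) → ℝ) =>
      ((Finset.univ.filter fun i => q.2 i = q.2 j).card : ℝ)) := by
    intro j
    simp_rw [Finset.card_filter]
    push_cast
    refine Finset.measurable_sum _ (fun i _ => ?_)
    exact Measurable.ite (measurableSet_eq_fun measurable_snd.eval measurable_snd.eval) measurable_const measurable_const
  have hSmeas : ∀ j, MeasurableSet (S j) := by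
    intro j
    exact measurableSet_le ((hcntlt_meas j).add (measurable_fst.mul (hcnteq_meas j)))
      measurable_const
  -- the null set where U is outside (0,1)
  have hUnull : μ {ω | U ω ∉ Set.Ioo (0:ℝ) 1} = 0 := by
    have h1 : {ω | U ω ∉ Set.Ioo (0:ℝ) 1} = U ⁻¹' (Set.Ioo (0:ℝ) 1)ᶜ := rfl
    rw [h1, ← Measure.map_apply hUmeas measurableSet_Ioo.compl, hUunif,
      Measure.restrict_apply measurableSet_Ioo.compl, Set.compl_inter_self, measure_empty]
  -- event inclusion
  have hincl : {ω | pval ω ≤ α ∧ (Z (Fin.last n) ω).2 ∉ R}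
      ⊆ (J ⁻¹' S (Fin.last n)) ∪ {ω | U ω ∉ Set.Ioo (0:ℝ) 1} := by
    rintro ω ⟨hpα, hY⟩
    by_cases hU : U ω ∈ Set.Ioo (0:ℝ) 1
    · left
      obtain ⟨hU0, hU1⟩ := hU
      have hab : Wf (Fin.last n) ω ≤ V (Z (Fin.last n) ω).1 r :=
        hVmono (Z (Fin.last n) ω).1 (Z (Fin.last n) ω).2 r hY hr
      -- counts over Fin (n+1) versus Fin n
      have hclt : (Finset.univ.filter fun i : Fin (n+1) => Wf i ω < Wf (Fin.last n) ω).card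
          = (Finset.univ.filter fun i : Fin n =>
              Wf i.castSucc ω < Wf (Fin.last n) ω).card :=
        castSucc_filter_card_of_not _ (lt_irrefl _)
      have hceq : (Finset.univ.filter fun i : Fin (n+1) => Wf i ω = Wf (Fin.last n) ω).card
          = (Finset.univ.filter fun i : Fin n =>
              Wf i.castSucc ω = Wf (Fin.last n) ω).card + 1 :=
        castSucc_filter_card_of_pos _ rfl
      simp only [hS, Set.mem_preimage, Set.mem_setOf_eq, hJ]
      rw [hclt, hceq]
      -- from hpval
      have hpv' : ((Finset.univ.filter (fun i : Fin n =>
            V (Z i.castSucc ω).1 (Z i.castSucc ω).2 < V (Z (Fin.last n) ω).1 r)).card : ℝ)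
          + U ω * (1 + ((Finset.univ.filter (fun i : Fin n =>
            V (Z i.castSucc ω).1 (Z i.castSucc ω).2 = V (Z (Fin.last n) ω).1 r)).card : ℝ))
          ≤ t := by
        have h := hpα
        rw [hpval ω, div_le_iff₀ hn1] at h
        exact h
      simp only [hWf] at hab ⊢
      push_cast
      rcases eq_or_lt_of_le hab with heq | hlt
      · simp only [heq]
        linarith [hpv']
      · have hkey := count_lt_add_eq_le
          (fun i : Fin n => V (Z i.castSucc ω).1 (Z i.castSucc ω).2) hlt
        have hkeyR : ((Finset.univ.filter (fun i : Fin n =>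
              V (Z i.castSucc ω).1 (Z i.castSucc ω).2
                < V (Z (Fin.last n) ω).1 (Z (Fin.last n) ω).2)).card : ℝ)
            + ((Finset.univ.filter (fun i : Fin n =>
              V (Z i.castSucc ω).1 (Z i.castSucc ω).2
                = V (Z (Fin.last n) ω).1 (Z (Fin.last n) ω).2)).card : ℝ)
            ≤ ((Finset.univ.filter (fun i : Fin n =>
              V (Z i.castSucc ω).1 (Z i.castSucc ω).2
                < V (Z (Fin.last n) ω).1 r)).card : ℝ) := by
          exact_mod_cast hkey
        have heA0 : (0:ℝ) ≤ ((Finset.univ.filter (fun i : Fin n =>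
            V (Z i.castSucc ω).1 (Z i.castSucc ω).2
              = V (Z (Fin.last n) ω).1 (Z (Fin.last n) ω).2)).card : ℝ) := Nat.cast_nonneg _
        have heB0 : (0:ℝ) ≤ ((Finset.univ.filter (fun i : Fin n =>
            V (Z i.castSucc ω).1 (Z i.castSucc ω).2
              = V (Z (Fin.last n) ω).1 r)).card : ℝ) := Nat.cast_nonneg _
        nlinarith [mul_nonneg (sub_nonneg.mpr hU1.le) heA0, mul_nonneg hU0.le heB0]
    · right; exact hU
  -- main measure bound via inclusion
  have hmain : μ {ω | pval ω ≤ α ∧ (Z (Fin.last n) ω).2 ∉ R} ≤ κ (S (Fin.last n)) := by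
    calc μ {ω | pval ω ≤ α ∧ (Z (Fin.last n) ω).2 ∉ R}
        ≤ μ ((J ⁻¹' S (Fin.last n)) ∪ {ω | U ω ∉ Set.Ioo (0:ℝ) 1}) := measure_mono hincl
      _ ≤ μ (J ⁻¹' S (Fin.last n)) + μ {ω | U ω ∉ Set.Ioo (0:ℝ) 1} := measure_union_le _ _
      _ = μ (J ⁻¹' S (Fin.last n)) := by rw [hUnull, add_zero]
      _ = κ (S (Fin.last n)) := by
          rw [← Measure.map_apply hJmeas (hSmeas _), hκJ]
  -- exchangeability
  have hexch : ∀ j : Fin (n+1), κ (S j) = κ (S (Fin.last n)) := by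
    intro j
    set σ : Equiv.Perm (Fin (n+1)) := Equiv.swap j (Fin.last n) with hσ
    have hcompmeas : Measurable (fun w : Fin (n+1) → ℝ => w ∘ σ) :=
      measurable_pi_lambda _ (fun i => measurable_pi_apply (σ i))
    have hmp : MeasurePreserving
        (Prod.map (id : ℝ → ℝ) (fun w : Fin (n+1) → ℝ => w ∘ σ)) κ κ :=
      (MeasurePreserving.id (μ.map U)).prod ⟨hcompmeas, pi_map_comp_perm ν σ⟩
    have hpre : (Prod.map (id : ℝ → ℝ) (fun w : Fin (n+1) → ℝ => w ∘ σ)) ⁻¹' (S j)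
        = S (Fin.last n) := by
      ext q
      simp only [hS, Set.mem_preimage, Set.mem_setOf_eq, Prod.map, Function.comp, id_eq]
      have hσj : σ j = Fin.last n := Equiv.swap_apply_left j (Fin.last n)
      simp only [hσj]
      rw [perm_filter_card σ (fun k => q.2 k < q.2 (Fin.last n)),
        perm_filter_card σ (fun k => q.2 k = q.2 (Fin.last n))]
    have h := hmp.measure_preimage (hSmeas j).nullMeasurableSet
    rw [hpre] at h
    exact h.symm
  -- Fubini bound
  have hsum : ∑ j : Fin (n+1), κ (S j) ≤ ENNReal.ofReal t := by
    have happ : ∀ j : Fin (n+1), κ (S j)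
        = ∫⁻ w, (μ.map U) ((fun u => (u, w)) ⁻¹' S j)
            ∂(Measure.pi fun _ : Fin (n+1) => ν) :=
      fun j => Measure.prod_apply_symm (hSmeas j)
    calc ∑ j : Fin (n+1), κ (S j)
        = ∑ j : Fin (n+1), ∫⁻ w, (μ.map U) ((fun u => (u, w)) ⁻¹' S j)
            ∂(Measure.pi fun _ : Fin (n+1) => ν) :=
          Finset.sum_congr rfl (fun j _ => happ j)
      _ = ∫⁻ w, ∑ j : Fin (n+1), (μ.map U) ((fun u => (u, w)) ⁻¹' S j)
            ∂(Measure.pi fun _ : Fin (n+1) => ν) :=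
          (lintegral_finset_sum _
            (fun j _ => measurable_measure_prodMk_right (hSmeas j))).symm
      _ ≤ ∫⁻ _, ENNReal.ofReal t ∂(Measure.pi fun _ : Fin (n+1) => ν) := by
          refine lintegral_mono (fun w => ?_)
          rw [hUunif]
          exact slice_sum w ht0
      _ = ENNReal.ofReal t := by rw [lintegral_const, measure_univ, mul_one]
  -- combine
  have hsum' : (↑(n+1:ℕ) : ENNReal) * κ (S (Fin.last n)) ≤ ENNReal.ofReal t := by
    have h : ∑ j : Fin (n+1), κ (S j) = (↑(n+1:ℕ) : ENNReal) * κ (S (Fin.last n)) := by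
      rw [Finset.sum_congr rfl (fun j _ => hexch j), Finset.sum_const, Finset.card_univ,
        Fintype.card_fin, nsmul_eq_mul]
    rw [← h]
    exact hsum
  have ht_eq : ENNReal.ofReal t = (↑(n+1:ℕ) : ENNReal) * ENNReal.ofReal α := by
    rw [ht_def, mul_comm α ((n:ℝ)+1), ENNReal.ofReal_mul (by positivity)]
    congr 1
    rw [show ((n:ℝ)+1) = ((n+1:ℕ):ℝ) by push_cast; ring, ENNReal.ofReal_natCast]
  have hfin : κ (S (Fin.last n)) ≤ ENNReal.ofReal α := by
    rw [ht_eq] at hsum'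
    exact (ENNReal.mul_le_mul_iff_right (by simp) (by simp)).mp hsum'
  exact hmain.trans hfin
end

section
/- Let m ≥ 1, q ∈ (0,1), and p_1,…,p_m ∈ [0,1], and let S(p) denote the BH rejection set at level q. Suppose j ∈ S(p), and let p' ∈ [0,1]^m be obtained from p by setting p'_j = 0 and p'_l = p_l for all l ≠ j. Then S(p') = S(p). -/
/-- The Benjamini–Hochberg threshold index:
`k*(p) = max {k ∈ {0,1,…,m} : #{j : p_j ≤ q k / m} ≥ k}`. -/
noncomputable def bhK (q : ℝ) {m : ℕ} (P : Fin m → ℝ) : ℕ :=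
  Nat.findGreatest
    (fun k => k ≤ (Finset.univ.filter (fun j : Fin m => P j ≤ q * k / m)).card) m

/-- The Benjamini–Hochberg rejection set `S(p) = {j : p_j ≤ q k*(p) / m}`. -/
noncomputable def bhS (q : ℝ) {m : ℕ} (P : Fin m → ℝ) : Finset (Fin m) :=
  Finset.univ.filter (fun j : Fin m => P j ≤ q * (bhK q P) / m)


/-- **Step-up invariance of BH under sending a rejected p-value to zero.**
If `j` is rejected by the BH procedure, replacing `p_j` by `0` (leaving all other
p-values unchanged) does not change the BH rejection set. -/
theorem bh_invariant_update_rejected_to_zero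
    (m : ℕ) (hm : 1 ≤ m) (q : ℝ) (hq : q ∈ Set.Ioo (0 : ℝ) 1)
    (P : Fin m → ℝ) (hP : ∀ j, P j ∈ Set.Icc (0 : ℝ) 1)
    (j : Fin m) (hj : j ∈ bhS q P) :
    bhS q (Function.update P j 0) = bhS q P := by
  obtain ⟨hq0, hq1⟩ := hq
  have hm0 : (0:ℝ) < m := by exact_mod_cast hm
  set P' := Function.update P j 0 with hP'def
  set k0 := bhK q P with hk0
  have hjle : P j ≤ q * k0 / m := by
    simpa [bhS, hk0] using hj
  have hfilter : ∀ k : ℕ, k0 ≤ k →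
      Finset.univ.filter (fun l : Fin m => P' l ≤ q * k / m)
        = Finset.univ.filter (fun l : Fin m => P l ≤ q * k / m) := by
    intro k hk
    have hth : q * k0 / m ≤ q * k / m := by
      have hk' : (k0:ℝ) ≤ k := by exact_mod_cast hk
      gcongr
    have hnn : (0:ℝ) ≤ q * k / m := by positivity
    apply Finset.filter_congr
    intro l _
    rcases eq_or_ne l j with rfl | hne
    · simp only [hP'def, Function.update_self]
      exact iff_of_true hnn (le_trans hjle hth)
    · simp [hP'def, Function.update_of_ne hne]
  have hpredP' : (bhK q P') ≤ (Finset.univ.filter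
      (fun l : Fin m => P' l ≤ q * (bhK q P') / m)).card := by
    by_cases h0 : bhK q P' = 0
    · simp [h0]
    · exact Nat.findGreatest_of_ne_zero
        (P := fun k => k ≤ (Finset.univ.filter (fun l : Fin m => P' l ≤ q * k / m)).card)
        (n := m) rfl h0
  have hpredP : k0 ≤ (Finset.univ.filter
      (fun l : Fin m => P l ≤ q * k0 / m)).card := by
    by_cases h0 : k0 = 0
    · simp [h0]
    · exact Nat.findGreatest_of_ne_zero
        (P := fun k => k ≤ (Finset.univ.filter (fun l : Fin m => P l ≤ q * k / m)).card)
        (n := m) rfl h0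
  have hK : bhK q P' = k0 := by
    apply le_antisymm
    · by_contra h
      push_neg at h
      have hle : bhK q P' ≤ m := Nat.findGreatest_le m
      have hcard : (bhK q P') ≤ (Finset.univ.filter
          (fun l : Fin m => P l ≤ q * (bhK q P') / m)).card := by
        rw [← hfilter _ (le_of_lt h)]
        exact hpredP'
      exact (Nat.findGreatest_is_greatest
        (P := fun k => k ≤ (Finset.univ.filter (fun l : Fin m => P l ≤ q * k / m)).card)
        (n := m) h hle) hcard
    · apply Nat.le_findGreatest
        (P := fun k => k ≤ (Finset.univ.filter (fun l : Fin m => P' l ≤ q * k / m)).card)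
        (Nat.findGreatest_le m)
      show k0 ≤ (Finset.univ.filter (fun l : Fin m => P' l ≤ q * k0 / m)).card
      rw [hfilter k0 (le_refl _)]
      exact hpredP
  have h1 : bhS q P' = Finset.univ.filter (fun l : Fin m => P' l ≤ q * k0 / m) := by
    show Finset.univ.filter (fun l : Fin m => P' l ≤ q * (bhK q P') / m) = _
    rw [hK]
  rw [h1, hfilter k0 (le_refl _)]
  rfl
end

section
/- Let m ≥ 1, q ∈ (0,1), and p, p' ∈ [0,1]^m, and let S(·) denote the BH rejection set at level q. Suppose j ∈ S(p) and that for every l ∈ {1,…,m}: if p_l > p_j then p'_l = p_l, and if p_l ≤ p_j then p'_l ≤ p_j. Then S(p') = S(p). -/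
/-- **Replacement lemma for the BH procedure** (key combinatorial step in the proof of
Theorem 3.2). If `j ∈ S(p)` and `p'` agrees with `p` on all coordinates with `p_l > p_j`
while every coordinate with `p_l ≤ p_j` satisfies `p'_l ≤ p_j`, then `S(p') = S(p)`. -/
theorem bh_replacement_lemma
    (m : ℕ) (hm : 1 ≤ m) (q : ℝ) (hq : q ∈ Set.Ioo (0 : ℝ) 1)
    (P P' : Fin m → ℝ) (hP : ∀ l, P l ∈ Set.Icc (0 : ℝ) 1)
    (hP' : ∀ l, P' l ∈ Set.Icc (0 : ℝ) 1)
    (j : Fin m) (hj : j ∈ bhS q P)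
    (hgt : ∀ l, P j < P l → P' l = P l)
    (hle : ∀ l, P l ≤ P j → P' l ≤ P j) :
    bhS q P' = bhS q P := by
  obtain ⟨hq0, hq1⟩ := hq
  -- counting sets agree for thresholds ≥ P j
  have key : ∀ t : ℝ, P j ≤ t →
      (Finset.univ.filter (fun l : Fin m => P' l ≤ t))
        = (Finset.univ.filter (fun l : Fin m => P l ≤ t)) := by
    intro t ht
    ext l
    simp only [Finset.mem_filter, Finset.mem_univ, true_and]
    constructor
    · intro h
      by_cases hc : P l ≤ P j
      · exact hc.trans ht
      · rwa [hgt l (lt_of_not_ge hc)] at h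
    · intro h
      by_cases hc : P l ≤ P j
      · exact (hle l hc).trans ht
      · rw [hgt l (lt_of_not_ge hc)]; exact h
  set k := bhK q P with hk
  have hjk : P j ≤ q * k / m := by
    simpa [bhS] using hj
  have hmono : ∀ k' : ℕ, k ≤ k' → P j ≤ q * k' / m := by
    intro k' hkk'
    refine hjk.trans ?_
    have hm0 : (0:ℝ) < m := by exact_mod_cast hm
    refine (div_le_div_iff_of_pos_right hm0).mpr ?_
    have hkR : (k:ℝ) ≤ k' := by exact_mod_cast hkk'
    nlinarith
  -- the predicate at k holds
  have hpredP : k ≤ (Finset.univ.filter (fun l : Fin m => P l ≤ q * k / m)).card := by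
    exact Nat.findGreatest_spec (P := fun k =>
      k ≤ (Finset.univ.filter (fun l : Fin m => P l ≤ q * k / m)).card)
      (Nat.zero_le m) (Nat.zero_le _)
  have hkm : k ≤ m := Nat.findGreatest_le m
  have hK' : bhK q P' = k := by
    have hle' : k ≤ bhK q P' := by
      apply Nat.le_findGreatest hkm
      rw [key _ (hmono k le_rfl)]
      exact hpredP
    have hge' : bhK q P' ≤ k := by
      by_contra hcon
      push_neg at hcon
      set k' := bhK q P' with hk'
      have hk'm : k' ≤ m := Nat.findGreatest_le m
      have hspec : k' ≤ (Finset.univ.filter (fun l : Fin m => P' l ≤ q * k' / m)).card :=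
        Nat.findGreatest_spec (P := fun k =>
          k ≤ (Finset.univ.filter (fun l : Fin m => P' l ≤ q * k / m)).card)
          (Nat.zero_le m) (Nat.zero_le _)
      rw [key _ (hmono k' hcon.le)] at hspec
      exact absurd hspec (Nat.findGreatest_is_greatest (P := fun k =>
        k ≤ (Finset.univ.filter (fun l : Fin m => P l ≤ q * k / m)).card) hcon hk'm)
    exact le_antisymm hge' hle'
  unfold bhS
  rw [hK', ← hk, key _ (hmono k le_rfl)]
end

section
/- Let (X, Y) be a random pair with values in ℝ^p × ℝ^d, let R ⊆ ℝ^d be a measurable set, let V : ℝ^p × ℝ^d → ℝ be a measurable function that is regionally monotone with respect to R, fix a point r ∈ R, and let U be uniformly distributed on (0,1) and independent of (X, Y). Define F(v, u) = P(V(X', Y') < v) + u·P(V(X', Y') = v), where (X', Y') is an independent copy of (X, Y). Then for every t ∈ [0,1], P(F(V(X, r), U) ≤ t and Y ∉ R) ≤ t. -/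
open MeasureTheory ProbabilityTheory
open scoped ENNReal

section KeyAux
open Set

lemma key_pvalue {Ω : Type*} [MeasurableSpace Ω] (μ : Measure Ω) [IsProbabilityMeasure μ]
    (W U : Ω → ℝ) (hW : Measurable W) (hU : Measurable U)
    (hUunif : Measure.map U μ = volume.restrict (Set.Ioo (0 : ℝ) 1))
    (hInd : IndepFun U W μ) (t : ℝ) (ht0 : 0 < t) (ht1 : t ≤ 1) :
    μ {ω | (μ (W ⁻¹' Iio (W ω))).toReal + U ω * (μ (W ⁻¹' {W ω})).toReal ≤ t
        ∧ U ω ∈ Set.Ioo (0:ℝ) 1} ≤ ENNReal.ofReal t := by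
  set D : Set ℝ := {v | ENNReal.ofReal t < μ (W ⁻¹' Iic v)} with hD
  -- if D is empty, then μ univ ≤ ofReal t and we are done
  by_cases hDne : D.Nonempty
  swap
  · have hall : ∀ v : ℝ, μ (W ⁻¹' Iic v) ≤ ENNReal.ofReal t :=
      fun v => not_lt.mp (fun h => hDne ⟨v, h⟩)
    have huniv : μ (Set.univ : Set Ω) ≤ ENNReal.ofReal t := by
      have hU : (Set.univ : Set Ω) = ⋃ n : ℕ, W ⁻¹' Iic (n : ℝ) := by
        ext ω; simp only [mem_univ, mem_iUnion, mem_preimage, mem_Iic, true_iff]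
        obtain ⟨n, hn⟩ := exists_nat_ge (W ω); exact ⟨n, hn⟩
      have hdir : Directed (· ⊆ ·) (fun n : ℕ => W ⁻¹' Iic (n : ℝ)) :=
        Monotone.directed_le fun n m h =>
          preimage_mono (Iic_subset_Iic.mpr (by exact_mod_cast h))
      rw [hU, hdir.measure_iUnion]
      exact iSup_le fun n => hall n
    exact le_trans (measure_mono (subset_univ _)) huniv
  -- D is bounded below
  have hnotall : ∃ v : ℝ, μ (W ⁻¹' Iic v) ≤ ENNReal.ofReal t := by
    by_contra h
    push_neg at h
    have hiInt : (⋂ n : ℕ, W ⁻¹' Iic (-(n : ℝ))) = ∅ := by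
      ext ω; simp only [mem_iInter, mem_preimage, mem_Iic, mem_empty_iff_false, iff_false]
      push_neg
      obtain ⟨n, hn⟩ := exists_nat_gt (-(W ω))
      exact ⟨n, by linarith⟩
    have hdir : Directed (· ⊇ ·) (fun n : ℕ => W ⁻¹' Iic (-(n : ℝ))) :=
      Antitone.directed_ge fun n m h =>
        preimage_mono (Iic_subset_Iic.mpr (by simp; exact_mod_cast h))
    have := Directed.measure_iInter (μ := μ)
      (fun n => (hW measurableSet_Iic).nullMeasurableSet) hdir ⟨0, measure_ne_top μ _⟩
    rw [hiInt, measure_empty] at this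
    have hle0 : ENNReal.ofReal t ≤ 0 := by
      rw [this]
      exact le_iInf fun n => le_of_lt (h _)
    exact (ENNReal.ofReal_pos.mpr ht0).ne' (le_antisymm hle0 zero_le)
  obtain ⟨v₀, hv₀⟩ := hnotall
  have hbdd : BddBelow D := by
    refine ⟨v₀, fun w hw => ?_⟩
    by_contra h
    push_neg at h
    exact absurd (le_trans (measure_mono (preimage_mono (Iic_subset_Iic.mpr h.le))) hv₀)
      (not_le.mpr hw)
  set q := sInf D with hq
  -- μ (W < q) ≤ ofReal t
  have hIio : W ⁻¹' Iio q = ⋃ n : ℕ, W ⁻¹' Iic (q - 1 / (n + 1)) := by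
    ext ω
    simp only [mem_preimage, mem_Iio, mem_iUnion, mem_Iic]
    constructor
    · intro h
      obtain ⟨n, hn⟩ := exists_nat_one_div_lt (sub_pos.mpr h)
      exact ⟨n, by push_cast at hn ⊢; linarith⟩
    · rintro ⟨n, hn⟩
      have : (0:ℝ) < 1 / (n + 1) := by positivity
      linarith
  have hqle : μ (W ⁻¹' Iio q) ≤ ENNReal.ofReal t := by
    rw [hIio]
    have hdir : Directed (· ⊆ ·) (fun n : ℕ => W ⁻¹' Iic (q - 1 / ((n:ℝ) + 1))) := by
      refine Monotone.directed_le fun n m h => preimage_mono (Iic_subset_Iic.mpr ?_)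
      have hnm : (n:ℝ) ≤ (m:ℝ) := by exact_mod_cast h
      have : (1:ℝ)/((m:ℝ)+1) ≤ 1/((n:ℝ)+1) :=
        one_div_le_one_div_of_le (by positivity) (by linarith)
      linarith
    rw [hdir.measure_iUnion]
    refine iSup_le fun n => ?_
    by_contra h
    push_neg at h
    have hmem : q - 1 / ((n:ℝ) + 1) ∈ D := h
    have := csInf_le hbdd hmem
    have hpos : (0:ℝ) < 1 / ((n:ℝ) + 1) := by positivity
    rw [← hq] at this
    linarith
  -- for w > q, ofReal t < μ (W < w)
  have hgt : ∀ w : ℝ, q < w → ENNReal.ofReal t < μ (W ⁻¹' Iio w) := by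
    intro w hw
    obtain ⟨v, hvD, hvw⟩ := (csInf_lt_iff hbdd hDne).mp hw
    exact lt_of_lt_of_le hvD (measure_mono (preimage_mono (Iic_subset_Iio.mpr hvw)))
  set g : ℝ := (μ (W ⁻¹' Iio q)).toReal with hg
  set c : ℝ := (μ (W ⁻¹' {q})).toReal with hc
  have hgle : g ≤ t := by
    have := ENNReal.toReal_mono ENNReal.ofReal_ne_top hqle
    rwa [ENNReal.toReal_ofReal ht0.le] at this
  have hg0 : 0 ≤ g := ENNReal.toReal_nonneg
  have hc0 : 0 ≤ c := ENNReal.toReal_nonneg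
  set S : Set ℝ := Ioo (0:ℝ) 1 ∩ {u | u * c ≤ t - g} with hS
  have hSmeas : MeasurableSet S :=
    measurableSet_Ioo.inter (measurableSet_le (measurable_id.mul_const c) measurable_const)
  -- event inclusion
  have hincl : {ω | (μ (W ⁻¹' Iio (W ω))).toReal + U ω * (μ (W ⁻¹' {W ω})).toReal ≤ t
        ∧ U ω ∈ Set.Ioo (0:ℝ) 1} ⊆ (W ⁻¹' Iio q) ∪ (U ⁻¹' S ∩ W ⁻¹' {q}) := by
    rintro ω ⟨hle, hUω⟩
    rcases lt_trichotomy (W ω) q with h | h | h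
    · exact Or.inl h
    · refine Or.inr ⟨⟨hUω, ?_⟩, h⟩
      rw [h] at hle
      simp only [mem_setOf_eq]
      rw [← hg, ← hc] at hle
      linarith
    · exfalso
      have h1 := hgt (W ω) h
      have h2 : t < (μ (W ⁻¹' Iio (W ω))).toReal := by
        have := ENNReal.toReal_strict_mono (measure_ne_top μ _) h1
        rwa [ENNReal.toReal_ofReal ht0.le] at this
      have h3 : 0 ≤ U ω * (μ (W ⁻¹' {W ω})).toReal :=
        mul_nonneg hUω.1.le ENNReal.toReal_nonneg
      linarith
  refine le_trans (measure_mono hincl) (le_trans (measure_union_le _ _) ?_)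
  -- atom part
  have hprod : μ (U ⁻¹' S ∩ W ⁻¹' {q}) = μ (U ⁻¹' S) * μ (W ⁻¹' {q}) :=
    hInd.measure_inter_preimage_eq_mul S {q} hSmeas (measurableSet_singleton q)
  have hUS : μ (U ⁻¹' S) = volume S := by
    rw [← Measure.map_apply hU hSmeas, hUunif, Measure.restrict_apply hSmeas,
      inter_eq_self_of_subset_left (inter_subset_left)]
  have hatom : μ (U ⁻¹' S ∩ W ⁻¹' {q}) ≤ ENNReal.ofReal (t - g) := by
    rw [hprod, hUS]
    by_cases hcz : c = 0
    · have : μ (W ⁻¹' {q}) = 0 := by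
        have h' : (μ (W ⁻¹' {q})).toReal = 0 := by rw [← hc]; exact hcz
        exact ((ENNReal.toReal_eq_zero_iff _).mp h').resolve_right (measure_ne_top μ _)
      rw [this, mul_zero]
      exact zero_le
    · have hcpos : 0 < c := lt_of_le_of_ne hc0 (Ne.symm hcz)
      have hSsub : S ⊆ Ioc 0 ((t - g) / c) := by
        rintro u ⟨hu1, hu2⟩
        exact ⟨hu1.1, (le_div_iff₀ hcpos).mpr hu2⟩
      have hvol : volume S ≤ ENNReal.ofReal ((t - g) / c) := by
        calc volume S ≤ volume (Ioc 0 ((t - g) / c)) := measure_mono hSsub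
        _ = ENNReal.ofReal ((t - g) / c - 0) := Real.volume_Ioc
        _ = ENNReal.ofReal ((t - g) / c) := by ring_nf
      have hWq : μ (W ⁻¹' {q}) = ENNReal.ofReal c := by
        rw [hc, ENNReal.ofReal_toReal (measure_ne_top μ _)]
      calc volume S * μ (W ⁻¹' {q}) ≤ ENNReal.ofReal ((t - g) / c) * ENNReal.ofReal c := by
            rw [hWq]; exact mul_le_mul_left hvol _
        _ = ENNReal.ofReal ((t - g) / c * c) := (ENNReal.ofReal_mul (div_nonneg (by linarith) hc0)).symm
        _ = ENNReal.ofReal (t - g) := by rw [div_mul_cancel₀ _ hcz]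
  calc μ (W ⁻¹' Iio q) + μ (U ⁻¹' S ∩ W ⁻¹' {q})
      ≤ ENNReal.ofReal g + ENNReal.ofReal (t - g) := by
        refine add_le_add ?_ hatom
        rw [hg, ENNReal.ofReal_toReal (measure_ne_top μ _)]
    _ = ENNReal.ofReal t := by
        rw [← ENNReal.ofReal_add hg0 (by linarith)]; ring_nf

end KeyAux

/-- **Population-level conservativeness of the asymptotic conformal p-value**
(Appendix D, supporting Theorem 4.1). With `F(v, u) = P(V(X', Y') < v) + u·P(V(X', Y') = v)`
computed under the distribution of `(X, Y)`, a regionally monotone measurable score `V`,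
`r ∈ R`, and `U` uniform on `(0,1)` independent of `(X, Y)`, for every `t ∈ [0,1]`,
`P(F(V(X, r), U) ≤ t and Y ∉ R) ≤ t`. -/
theorem population_conformal_pvalue_conservative
    {Ω : Type*} [MeasurableSpace Ω] (μ : Measure Ω) [IsProbabilityMeasure μ]
    (p d : ℕ)
    (X : Ω → Fin p → ℝ) (Y : Ω → Fin d → ℝ)
    (hX : Measurable X) (hY : Measurable Y)
    (R : Set (Fin d → ℝ)) (hR : MeasurableSet R)
    (V : (Fin p → ℝ) → (Fin d → ℝ) → ℝ)
    (hVmeas : Measurable (fun q : (Fin p → ℝ) × (Fin d → ℝ) => V q.1 q.2))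
    (hVmono : RegionallyMonotone R V)
    (r : Fin d → ℝ) (hr : r ∈ R)
    (U : Ω → ℝ) (hUmeas : Measurable U)
    (hUunif : Measure.map U μ = volume.restrict (Set.Ioo (0 : ℝ) 1))
    (hUindep : IndepFun U (fun ω => (X ω, Y ω)) μ)
    (F : ℝ → ℝ → ℝ)
    (hF : ∀ v u, F v u = (μ {ω | V (X ω) (Y ω) < v}).toReal
        + u * (μ {ω | V (X ω) (Y ω) = v}).toReal) :
    ∀ t ∈ Set.Icc (0 : ℝ) 1,
      μ {ω | F (V (X ω) r) (U ω) ≤ t ∧ Y ω ∉ R} ≤ ENNReal.ofReal t := by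

  intro t ht
  set W : Ω → ℝ := fun ω => V (X ω) (Y ω) with hWdef
  have hW : Measurable W := hVmeas.comp (hX.prodMk hY)
  have hIndW : IndepFun U W μ := by
    have := hUindep.comp (measurable_id : Measurable (id : ℝ → ℝ)) hVmeas
    exact this
  -- U ∈ (0,1) almost surely
  have hUae : μ (U ⁻¹' (Set.Ioo (0:ℝ) 1)ᶜ) = 0 := by
    rw [← Measure.map_apply hUmeas measurableSet_Ioo.compl, hUunif,
      Measure.restrict_apply measurableSet_Ioo.compl, Set.compl_inter_self, measure_empty]
  -- main bound for positive t
  have key2 : ∀ s : ℝ, 0 < s → s ≤ 1 →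
      μ {ω | F (V (X ω) r) (U ω) ≤ s ∧ Y ω ∉ R} ≤ ENNReal.ofReal s := by
    intro s hs0 hs1
    have hincl : {ω | F (V (X ω) r) (U ω) ≤ s ∧ Y ω ∉ R} ∩ (U ⁻¹' Set.Ioo (0:ℝ) 1)
        ⊆ {ω | (μ (W ⁻¹' Set.Iio (W ω))).toReal + U ω * (μ (W ⁻¹' {W ω})).toReal ≤ s
            ∧ U ω ∈ Set.Ioo (0:ℝ) 1} := by
      rintro ω ⟨⟨hFle, hYR⟩, hUω⟩
      refine ⟨?_, hUω⟩
      have hv : W ω ≤ V (X ω) r := hVmono (X ω) (Y ω) r hYR hr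
      have hmono : (μ (W ⁻¹' Set.Iio (W ω))).toReal + U ω * (μ (W ⁻¹' {W ω})).toReal
          ≤ F (V (X ω) r) (U ω) := by
        rw [hF]
        have hsets1 : ∀ v : ℝ, {ω' | V (X ω') (Y ω') < v} = W ⁻¹' Set.Iio v := fun v => rfl
        have hsets2 : ∀ v : ℝ, {ω' | V (X ω') (Y ω') = v} = W ⁻¹' {v} := fun v => rfl
        rw [hsets1, hsets2]
        rcases eq_or_lt_of_le hv with h | h
        · rw [h]
        · have hu0 : (0:ℝ) ≤ U ω := hUω.1.le
          have hu1 : U ω ≤ 1 := hUω.2.le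
          have step1 : U ω * (μ (W ⁻¹' {W ω})).toReal ≤ (μ (W ⁻¹' {W ω})).toReal := by
            nlinarith [ENNReal.toReal_nonneg (a := μ (W ⁻¹' {W ω}))]
          have step2 : (μ (W ⁻¹' Set.Iio (W ω))).toReal + (μ (W ⁻¹' {W ω})).toReal
              = (μ (W ⁻¹' Set.Iic (W ω))).toReal := by
            rw [← ENNReal.toReal_add (measure_ne_top μ _) (measure_ne_top μ _),
              ← measure_union ?_ (hW (measurableSet_singleton _))]
            · congr 1
              congr 1
              ext x
              simp [Set.mem_preimage, le_iff_lt_or_eq]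
            · rintro s hs1' hs2' x hx
              have h1 := hs1' hx
              have h2 := hs2' hx
              simp only [Set.mem_preimage, Set.mem_Iio, Set.mem_singleton_iff] at h1 h2
              exact absurd h2.le (not_le.mpr (by rw [h2] at h1; exact absurd h1 (lt_irrefl _)))
          have step3 : (μ (W ⁻¹' Set.Iic (W ω))).toReal ≤ (μ (W ⁻¹' Set.Iio (V (X ω) r))).toReal :=
            ENNReal.toReal_mono (measure_ne_top μ _)
              (measure_mono (Set.preimage_mono (Set.Iic_subset_Iio.mpr h)))
          have step4 : (0:ℝ) ≤ U ω * (μ (W ⁻¹' {V (X ω) r})).toReal :=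
            mul_nonneg hu0 ENNReal.toReal_nonneg
          linarith
      exact le_trans hmono hFle
    calc μ {ω | F (V (X ω) r) (U ω) ≤ s ∧ Y ω ∉ R}
        ≤ μ ({ω | F (V (X ω) r) (U ω) ≤ s ∧ Y ω ∉ R} ∩ (U ⁻¹' Set.Ioo (0:ℝ) 1))
          + μ (U ⁻¹' (Set.Ioo (0:ℝ) 1)ᶜ) := by
          refine le_trans (measure_mono ?_) (measure_union_le _ _)
          intro ω hω
          by_cases h : U ω ∈ Set.Ioo (0:ℝ) 1
          · exact Or.inl ⟨hω, h⟩
          · exact Or.inr h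
      _ = μ ({ω | F (V (X ω) r) (U ω) ≤ s ∧ Y ω ∉ R} ∩ (U ⁻¹' Set.Ioo (0:ℝ) 1)) := by
          rw [hUae, add_zero]
      _ ≤ μ {ω | (μ (W ⁻¹' Set.Iio (W ω))).toReal + U ω * (μ (W ⁻¹' {W ω})).toReal ≤ s
            ∧ U ω ∈ Set.Ioo (0:ℝ) 1} := measure_mono hincl
      _ ≤ ENNReal.ofReal s := key_pvalue μ W U hW hUmeas hUunif hIndW s hs0 hs1
  rcases eq_or_lt_of_le ht.1 with h0 | h0
  · -- t = 0 : take limits along 1/(n+1)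
    rw [← h0, ENNReal.ofReal_zero]
    set a := μ {ω | F (V (X ω) r) (U ω) ≤ (0:ℝ) ∧ Y ω ∉ R} with ha
    have hbound : ∀ ε : ℝ, 0 < ε → ε ≤ 1 → a ≤ ENNReal.ofReal ε := by
      intro ε hε0 hε1
      refine le_trans (measure_mono ?_) (key2 ε hε0 hε1)
      rintro ω ⟨h1, h2⟩
      exact ⟨le_trans h1 hε0.le, h2⟩
    by_contra hne
    have hapos : 0 < a := pos_iff_ne_zero.mpr (fun h => hne (le_of_eq h))
    have hafin : a ≠ ⊤ := measure_ne_top μ _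
    have hat : 0 < a.toReal := ENNReal.toReal_pos hapos.ne' hafin
    set ε := min (a.toReal / 2) 1 with hε
    have hε0 : 0 < ε := lt_min (by linarith) one_pos
    have hε1 : ε ≤ 1 := min_le_right _ _
    have h1 := hbound ε hε0 hε1
    have h2 : ENNReal.ofReal ε < a := by
      rw [ENNReal.ofReal_lt_iff_lt_toReal hε0.le hafin]
      exact lt_of_le_of_lt (min_le_left _ _) (by linarith)
    exact absurd h1 (not_le.mpr h2)
  · exact key2 t h0 ht.2
end

section
/- Let R ⊆ ℝ^d be a closed set with topological boundary ∂R, let V : ℝ^p × ℝ^d → ℝ be regionally monotone with respect to R, let M ≥ 0, and define W(x, y) = M·1{y ∉ Rᶜ ∪ ∂R} + V(x, y). Fix a point r ∈ ∂R (note r ∈ R since R is closed). Then: (a) W is regionally monotone with respect to R; and (b) for any calibration data (x_1, y_1),…,(x_n, y_n) ∈ ℝ^p × ℝ^d, test covariates x_{n+1},…,x_{n+m} ∈ ℝ^p, tie-breaking values u_1,…,u_m ∈ [0,1], and level q ∈ (0,1), if for each score function A ∈ {V, W} one forms the randomized conformal p-values p_j^A = (#{i ≤ n : A(x_i, y_i)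 < A(x_{n+j}, r)} + u_j·(1 + #{i ≤ n : A(x_i, y_i) = A(x_{n+j}, r)}))/(n+1) and applies the BH procedure at level q, then the BH rejection set obtained with score W has cardinality at least that obtained with score V. -/
open scoped Classical

/-- The randomized conformal p-values formed from a score `A`, calibration data
`(x_i, y_i), i = 1, …, n`, test covariates `xt_j, j = 1, …, m`, a common test reference
point `r`, and tie-breaking values `u_j`:
`p_j^A = (#{i : A(x_i,y_i) < A(xt_j,r)} + u_j (1 + #{i : A(x_i,y_i) = A(xt_j,r)}))/(n+1)`. -/
noncomputable def conformalPvals {p d : ℕ} (n m : ℕ)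
    (A : (Fin p → ℝ) → (Fin d → ℝ) → ℝ)
    (x : Fin n → (Fin p → ℝ)) (y : Fin n → (Fin d → ℝ))
    (xt : Fin m → (Fin p → ℝ)) (r : Fin d → ℝ) (u : Fin m → ℝ) : Fin m → ℝ :=
  fun j =>
    (((Finset.univ.filter (fun i : Fin n => A (x i) (y i) < A (xt j) r)).card : ℝ)
      + u j * (1 + ((Finset.univ.filter
          (fun i : Fin n => A (x i) (y i) = A (xt j) r)).card : ℝ))) / (n + 1)

lemma bhK_mono {m : ℕ} {q : ℝ} {P P' : Fin m → ℝ} (h : ∀ j, P' j ≤ P j) :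
    bhK q P ≤ bhK q P' := by
  have hspec := Nat.findGreatest_spec
    (P := fun k => k ≤ (Finset.univ.filter (fun j : Fin m => P j ≤ q * k / m)).card)
    (m := 0) (Nat.zero_le m) (Nat.zero_le _)
  have hle : bhK q P ≤ m := Nat.findGreatest_le m
  refine Nat.le_findGreatest hle ?_
  refine hspec.trans (Finset.card_le_card ?_)
  intro j hj
  simp only [Finset.mem_filter, Finset.mem_univ, true_and] at hj ⊢
  exact le_trans (h j) hj

lemma bhS_card_eq {m : ℕ} {q : ℝ} (hq : 0 < q) (P : Fin m → ℝ) :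
    (bhS q P).card = bhK q P := by
  rcases Nat.eq_zero_or_pos m with hm | hm
  · subst hm
    have h1 : (bhS q P).card ≤ 0 := by
      refine le_trans (Finset.card_le_card (Finset.subset_univ _)) ?_
      simp
    have h2 : bhK q P ≤ 0 := Nat.findGreatest_le 0
    omega
  set K := bhK q P with hK
  have hKspec := Nat.findGreatest_spec
    (P := fun k => k ≤ (Finset.univ.filter (fun j : Fin m => P j ≤ q * k / m)).card)
    (m := 0) (Nat.zero_le m) (Nat.zero_le _)
  have hbhS : bhS q P = Finset.univ.filter (fun j : Fin m => P j ≤ q * (K : ℕ) / m) := rfl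
  set c := (bhS q P).card with hc
  have hcm : c ≤ m := by
    refine le_trans (Finset.card_le_card (Finset.subset_univ _)) ?_
    simp
  have hKc : K ≤ c := by rw [hc, hbhS]; exact hKspec
  have hPredc : c ≤ (Finset.univ.filter (fun j : Fin m => P j ≤ q * (c : ℕ) / m)).card := by
    rw [hc, hbhS]
    refine Finset.card_le_card ?_
    intro j hj
    simp only [Finset.mem_filter, Finset.mem_univ, true_and] at hj ⊢
    refine hj.trans ?_
    have hmpos : (0:ℝ) < (m:ℝ) := by exact_mod_cast hm
    have h2 := hKc
    rw [hc, hbhS] at h2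
    have h3 : (K:ℝ) ≤ ((Finset.univ.filter
        (fun j : Fin m => P j ≤ q * (K:ℝ) / (m:ℝ))).card : ℝ) := by exact_mod_cast h2
    exact div_le_div_of_nonneg_right (mul_le_mul_of_nonneg_left h3 hq.le) hmpos.le
  have hcK : c ≤ K := Nat.le_findGreatest hcm hPredc
  omega

/-- **Proposition 4.3 (operational form): clipping never hurts.** Let `R` be closed,
`V` regionally monotone with respect to `R`, `M ≥ 0`, and
`W(x, y) = M·1{y ∉ Rᶜ ∪ ∂R} + V(x, y)`, with test reference point `r ∈ ∂R`. Then
(a) `W` is regionally monotone with respect to `R`, and (b) for any calibration data,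
test covariates, tie-breaking values in `[0,1]`, and level `q ∈ (0,1)`, the BH rejection
set computed from the conformal p-values of `W` has at least as many elements as the one
computed from the conformal p-values of `V`. -/
theorem clipped_score_monotone_and_selects_more
    (p d n m : ℕ)
    (R : Set (Fin d → ℝ)) (hRclosed : IsClosed R)
    (V : (Fin p → ℝ) → (Fin d → ℝ) → ℝ)
    (hVmono : RegionallyMonotone R V)
    (M : ℝ) (hM : 0 ≤ M)
    (W : (Fin p → ℝ) → (Fin d → ℝ) → ℝ)
    (hW : ∀ x y, W x y = M * (if y ∉ Rᶜ ∪ frontier R then (1 : ℝ) else 0) + V x y)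
    (r : Fin d → ℝ) (hr : r ∈ frontier R)
    (x : Fin n → (Fin p → ℝ)) (y : Fin n → (Fin d → ℝ))
    (xt : Fin m → (Fin p → ℝ))
    (u : Fin m → ℝ) (hu : ∀ j, u j ∈ Set.Icc (0 : ℝ) 1)
    (q : ℝ) (hq : q ∈ Set.Ioo (0 : ℝ) 1) :
    RegionallyMonotone R W ∧
      (bhS q (conformalPvals n m V x y xt r u)).card
        ≤ (bhS q (conformalPvals n m W x y xt r u)).card := by
  have hq0 := hq.1
  -- indicator nonneg and basic facts
  have hind_nonneg : ∀ yy : Fin d → ℝ,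
      (0:ℝ) ≤ (if yy ∉ Rᶜ ∪ frontier R then (1 : ℝ) else 0) := by
    intro yy; split_ifs <;> norm_num
  have hWr : ∀ xx, W xx r = V xx r := by
    intro xx
    rw [hW]
    have : ¬ (r ∉ Rᶜ ∪ frontier R) := by
      intro h; exact h (Or.inr hr)
    rw [if_neg this]; ring
  have hVleW : ∀ xx yy, V xx yy ≤ W xx yy := by
    intro xx yy
    rw [hW]
    nlinarith [hind_nonneg yy, mul_nonneg hM (hind_nonneg yy)]
  constructor
  · intro xx y' yy hy' hyy
    have h1 : W xx y' = V xx y' := by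
      rw [hW]
      have : ¬ (y' ∉ Rᶜ ∪ frontier R) := by
        intro h; exact h (Or.inl hy')
      rw [if_neg this]; ring
    rw [h1]
    exact (hVmono xx y' yy hy' hyy).trans (hVleW xx yy)
  · have hple : ∀ j, conformalPvals n m W x y xt r u j ≤ conformalPvals n m V x y xt r u j := by
      intro j
      unfold conformalPvals
      have hden : (0:ℝ) < (n:ℝ) + 1 := by positivity
      apply div_le_div_of_nonneg_right ?_ hden.le |>.trans_eq rfl
      rw [hWr (xt j)]
      set c := V (xt j) r with hc
      set Lw := Finset.univ.filter (fun i : Fin n => W (x i) (y i) < c) with hLw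
      set Ew := Finset.univ.filter (fun i : Fin n => W (x i) (y i) = c) with hEw
      set Lv := Finset.univ.filter (fun i : Fin n => V (x i) (y i) < c) with hLv
      set Ev := Finset.univ.filter (fun i : Fin n => V (x i) (y i) = c) with hEv
      have hL : Lw.card ≤ Lv.card := by
        refine Finset.card_le_card ?_
        intro i hi
        simp only [hLw, hLv, Finset.mem_filter, Finset.mem_univ, true_and] at hi ⊢
        exact lt_of_le_of_lt (hVleW (x i) (y i)) hi
      have hdw : Disjoint Lw Ew := by
        rw [Finset.disjoint_left]
        intro i hi hi'
        simp only [hLw, hEw, Finset.mem_filter, Finset.mem_univ, true_and] at hi hi'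
        exact absurd hi' (ne_of_lt hi)
      have hdv : Disjoint Lv Ev := by
        rw [Finset.disjoint_left]
        intro i hi hi'
        simp only [hLv, hEv, Finset.mem_filter, Finset.mem_univ, true_and] at hi hi'
        exact absurd hi' (ne_of_lt hi)
      have hLE : Lw.card + Ew.card ≤ Lv.card + Ev.card := by
        rw [← Finset.card_union_of_disjoint hdw, ← Finset.card_union_of_disjoint hdv]
        refine Finset.card_le_card ?_
        intro i hi
        simp only [hLw, hEw, hLv, hEv, Finset.mem_union, Finset.mem_filter,
          Finset.mem_univ, true_and] at hi ⊢
        have hle : W (x i) (y i) ≤ c := by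
          rcases hi with h | h
          · exact h.le
          · exact h.le
        have : V (x i) (y i) ≤ c := (hVleW (x i) (y i)).trans hle
        rcases lt_or_eq_of_le this with h | h
        · exact Or.inl h
        · exact Or.inr h
      obtain ⟨hu0, hu1⟩ := hu j
      have hLr : (Lw.card : ℝ) ≤ (Lv.card : ℝ) := by exact_mod_cast hL
      have hLEr : (Lw.card : ℝ) + (Ew.card : ℝ) ≤ (Lv.card : ℝ) + (Ev.card : ℝ) := by
        exact_mod_cast hLE
      nlinarith [mul_nonneg hu0 (sub_nonneg.mpr hLEr),
        mul_nonneg (sub_nonneg.mpr hu1) (sub_nonneg.mpr hLr)]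
    rw [bhS_card_eq hq0, bhS_card_eq hq0]
    exact bhK_mono hple
end
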